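/- arXiv:1205.5126 — 2 statements merged into one kernel-verified Lean document; each statement's English description precedes it below -/
import Mathlib

section
/- Let μ be a probability measure on a countable group G and let T : ℓ²(G) → ℓ²(G) be the right convolution operator (T f)(g) = Σ_{h ∈ G} μ(h) f(g h⁻¹). If G is amenable, then the operator norm of T equals 1. -/
/-!
The operator `T` is the average `∑ μ h • ρ h` of the right translations `ρ h f = f (· * h⁻¹)`,
which are isometries of `ℓ²(G)`; hence `‖T‖ ≤ 1`. Conversely, if `F` is a Følner sequence, the
normalised indicator functions of the sets `(F n)⁻¹` are unit vectors that every `ρ h` moves by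
`(|F n ∆ h⁻¹ F n| / |F n|)^(1/2) → 0`. By dominated convergence `T` moves them by an amount
tending to zero as well, which forces `‖T‖ ≥ 1`.
-/

open Filter
open scoped symmDiff ENNReal

/-- A Følner sequence for a group `G`: a sequence of nonempty finite subsets which is
asymptotically invariant under left translations. Its existence characterises amenability
for countable groups. -/
def IsFolner {G : Type*} [Group G] [DecidableEq G] (F : ℕ → Finset G) : Prop :=
  (∀ n, (F n).Nonempty) ∧
  ∀ g : G, Tendsto
    (fun n => (((F n) ∆ ((F n).image fun x => g * x)).card : ℝ) / (F n).card)
    atTop (nhds 0)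

open Topology

section AverageOfIsometries

variable {ι E : Type*} [NormedAddCommGroup E] [NormedSpace ℝ E] {μ : ι → ℝ}

lemma norm_smul_le_of_nonneg_of_norm_le {c : ℝ} (hc : 0 ≤ c) {x : E} {C : ℝ} (hx : ‖x‖ ≤ C) :
    ‖c • x‖ ≤ c * C := by
  rw [norm_smul, Real.norm_of_nonneg hc]
  exact mul_le_mul_of_nonneg_left hx hc

lemma summable_smul_of_norm_le [CompleteSpace E] (hμ0 : ∀ i, 0 ≤ μ i) (hμ : Summable μ)
    {v : ι → E} {C : ℝ} (hv : ∀ i, ‖v i‖ ≤ C) : Summable fun i => μ i • v i :=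
  (hμ.mul_right C).of_norm_bounded fun i => norm_smul_le_of_nonneg_of_norm_le (hμ0 i) (hv i)

lemma norm_tsum_smul_le (hμ0 : ∀ i, 0 ≤ μ i) (hμ : HasSum μ 1) {v : ι → E} {C : ℝ}
    (hv : ∀ i, ‖v i‖ ≤ C) : ‖∑' i, μ i • v i‖ ≤ C :=
  tsum_of_norm_bounded (by simpa using hμ.mul_right C) fun i =>
    norm_smul_le_of_nonneg_of_norm_le (hμ0 i) (hv i)

lemma tsum_smul_sub [CompleteSpace E] (hμ0 : ∀ i, 0 ≤ μ i) (hμ : HasSum μ 1) {v : ι → E}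
    {C : ℝ} (hv : ∀ i, ‖v i‖ ≤ C) (x : E) :
    ∑' i, μ i • v i - x = ∑' i, μ i • (v i - x) := by
  simp only [smul_sub]
  rw [(summable_smul_of_norm_le hμ0 hμ.summable hv).tsum_sub
    (hμ.summable.smul_const x), hμ.summable.tsum_smul_const, hμ.tsum_eq, one_smul]

lemma tendsto_tsum_smul_zero [CompleteSpace E] {α : Type*} {l : Filter α}
    (hμ0 : ∀ i, 0 ≤ μ i) (hμ : Summable μ) {v : α → ι → E} {C : ℝ} (hv : ∀ a i, ‖v a i‖ ≤ C)
    (h : ∀ i, Tendsto (v · i) l (𝓝 0)) : Tendsto (fun a => ∑' i, μ i • v a i) l (𝓝 0) := by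
  have := tendsto_tsum_of_dominated_convergence (g := fun _ => (0 : E)) (hμ.mul_right C)
    (fun i => by simpa using (h i).const_smul (μ i))
    (.of_forall fun a i => norm_smul_le_of_nonneg_of_norm_le (hμ0 i) (hv a i))
  rwa [tsum_zero] at this

lemma ContinuousLinearMap.one_le_opNorm_of_tendsto_sub {𝕜 F : Type*} [NontriviallyNormedField 𝕜]
    [NormedAddCommGroup F] [NormedSpace 𝕜 F] {α : Type*} {l : Filter α} [l.NeBot]
    (T : F →L[𝕜] F) {f : α → F} (hf : ∀ a, ‖f a‖ = 1)
    (h : Tendsto (fun a => T (f a) - f a) l (𝓝 0)) : 1 ≤ ‖T‖ := by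
  have hlim : Tendsto (fun a => 1 - ‖T (f a) - f a‖) l (𝓝 1) := by
    simpa using tendsto_const_nhds.sub h.norm
  refine le_of_tendsto hlim (.of_forall fun a => ?_)
  calc 1 - ‖T (f a) - f a‖ = ‖f a‖ - ‖f a - T (f a)‖ := by rw [hf, norm_sub_rev]
    _ ≤ ‖T (f a)‖ := by simpa using norm_sub_norm_le (f a) (f a - T (f a))
    _ ≤ ‖T‖ := by simpa [hf] using T.le_opNorm (f a)

variable (U : ι → E →ₗᵢ[ℝ] E) {T : E →L[ℝ] E}

lemma opNorm_le_one_of_eq_tsum_smul (hμ0 : ∀ i, 0 ≤ μ i) (hμ : HasSum μ 1)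
    (hT : ∀ x, T x = ∑' i, μ i • U i x) : ‖T‖ ≤ 1 :=
  T.opNorm_le_bound zero_le_one fun x => by
    rw [one_mul, hT]
    exact norm_tsum_smul_le hμ0 hμ fun i => ((U i).norm_map x).le

lemma opNorm_eq_one_of_tendsto_sub [CompleteSpace E] (hμ0 : ∀ i, 0 ≤ μ i) (hμ : HasSum μ 1)
    (hT : ∀ x, T x = ∑' i, μ i • U i x) {α : Type*} {l : Filter α} [l.NeBot] {f : α → E}
    (hf : ∀ a, ‖f a‖ = 1) (hfU : ∀ i, Tendsto (fun a => U i (f a) - f a) l (𝓝 0)) :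
    ‖T‖ = 1 := by
  refine le_antisymm (opNorm_le_one_of_eq_tsum_smul U hμ0 hμ hT)
    (T.one_le_opNorm_of_tendsto_sub (l := l) hf ?_)
  have hbound : ∀ a i, ‖U i (f a) - f a‖ ≤ 2 := fun a i => by
    linarith [norm_sub_le (U i (f a)) (f a), (U i).norm_map (f a), hf a]
  simp only [hT, tsum_smul_sub hμ0 hμ (fun i => ((U i).norm_map _).le)]
  exact tendsto_tsum_smul_zero hμ0 hμ.summable hbound hfU

end AverageOfIsometries

namespace lp

variable {α β 𝕜 E : Type*} [NormedAddCommGroup E] {p : ℝ≥0∞}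

lemma memℓp_comp_equiv (e : α ≃ β) (f : lp (fun _ : β => E) p) (hp : p ≠ 0) :
    Memℓp (f ∘ e) p := by
  obtain rfl | rfl | hp' := p.trichotomy
  · exact absurd rfl hp
  · rw [memℓp_infty_iff, Function.comp_def, ← Function.comp_def (‖f ·‖), e.surjective.range_comp]
    exact (lp.memℓp f).bddAbove
  · rw [memℓp_gen_iff hp'] at *
    exact (e.summable_iff (f := fun b => ‖f b‖ ^ p.toReal)).2 ((lp.memℓp f).summable hp')

lemma norm_comp_equiv (e : α ≃ β) (f : lp (fun _ : β => E) p) (hp : p ≠ 0) :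
    ‖(⟨f ∘ e, memℓp_comp_equiv e f hp⟩ : lp (fun _ : α => E) p)‖ = ‖f‖ := by
  obtain rfl | rfl | hp' := p.trichotomy
  · exact absurd rfl hp
  · simp only [norm_eq_ciSup]
    exact e.iSup_comp (g := fun b => ‖f b‖)
  · simp only [norm_eq_tsum_rpow hp']
    congr 1
    exact e.tsum_eq (fun b => ‖f b‖ ^ p.toReal)

section Indicator

variable [DecidableEq α]

variable (p) in
noncomputable def finsetIndicator (s : Finset α) : lp (fun _ : α => ℝ) p :=
  ∑ a ∈ s, lp.single p a 1

lemma finsetIndicator_apply (s : Finset α) (a : α) :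
    finsetIndicator p s a = if a ∈ s then 1 else 0 := by
  simp only [finsetIndicator, lp.coeFn_sum, Finset.sum_apply, lp.coeFn_single]
  exact Finset.sum_pi_single a (fun _ => (1 : ℝ)) s

lemma norm_rpow_finsetIndicator (hp : 0 < p.toReal) (s : Finset α) :
    ‖finsetIndicator p s‖ ^ p.toReal = s.card := by
  simpa [finsetIndicator] using lp.norm_sum_single hp (fun _ => (1 : ℝ)) s

lemma norm_finsetIndicator_sub (hp : p ≠ 0) (s t : Finset α) :
    ‖finsetIndicator p s - finsetIndicator p t‖ = ‖finsetIndicator p (s ∆ t)‖ := by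
  have h : ∀ a, ‖(finsetIndicator p s - finsetIndicator p t) a‖
      = ‖finsetIndicator p (s ∆ t) a‖ := fun a => by
    simp only [coeFn_sub, Pi.sub_apply, finsetIndicator_apply, Finset.mem_symmDiff]
    split_ifs <;> simp_all
  exact le_antisymm (norm_mono hp fun a => (h a).le) (norm_mono hp fun a => (h a).ge)

end Indicator

variable [Fact (1 ≤ p)]

variable (𝕜 E p) in
def compEquiv [NormedRing 𝕜] [Module 𝕜 E] [IsBoundedSMul 𝕜 E] (e : α ≃ β) :
    lp (fun _ : β => E) p →ₗᵢ[𝕜] lp (fun _ : α => E) p :=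
  have hp : p ≠ 0 := (zero_lt_one.trans_le Fact.out).ne'
  { toFun f := ⟨f ∘ e, memℓp_comp_equiv e f hp⟩
    map_add' _ _ := rfl
    map_smul' _ _ := rfl
    norm_map' f := norm_comp_equiv e f hp }

@[simp]
lemma compEquiv_apply [NormedRing 𝕜] [Module 𝕜 E] [IsBoundedSMul 𝕜 E] (e : α ≃ β)
    (f : lp (fun _ : β => E) p) (a : α) :
    compEquiv 𝕜 E p e f a = f (e a) := rfl

lemma compEquiv_finsetIndicator [DecidableEq α] [DecidableEq β] (e : α ≃ β) (s : Finset β) :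
    compEquiv ℝ ℝ p e (finsetIndicator p s) = finsetIndicator p (s.map e.symm.toEmbedding) := by
  ext a
  simp [finsetIndicator_apply]

lemma eq_tsum_smul_of_forall_apply_eq {ι : Type*} {μ : ι → ℝ} (hμ0 : ∀ i, 0 ≤ μ i)
    (hμ : Summable μ) {v : ι → lp (fun _ : α => ℝ) p} {C : ℝ} (hv : ∀ i, ‖v i‖ ≤ C)
    {x : lp (fun _ : α => ℝ) p} (hx : ∀ a, x a = ∑' i, μ i * v i a) :
    x = ∑' i, μ i • v i := by
  ext a
  exact (hx a).trans
    ((evalCLM ℝ (fun _ : α => ℝ) p a).map_tsum (summable_smul_of_norm_le hμ0 hμ hv)).symm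

end lp

lemma tendsto_zero_of_tendsto_rpow_zero {α : Type*} {l : Filter α} {x : α → ℝ} {r : ℝ}
    (hx : ∀ a, 0 ≤ x a) (hr : 0 < r) (h : Tendsto (fun a => x a ^ r) l (𝓝 0)) :
    Tendsto x l (𝓝 0) :=
  (h.rpow_const_nhds_zero (inv_pos.2 hr)).congr fun a => Real.rpow_rpow_inv (hx a) hr.ne'

section Folner

variable {G : Type*} [Group G] [DecidableEq G] {p : ℝ≥0∞} [Fact (1 ≤ p)]

lemma card_image_inv_mul_right_symmDiff (F : Finset G) (h : G) :
    ((F.image (·⁻¹)).image (· * h) ∆ F.image (·⁻¹)).card = (F ∆ F.image (h⁻¹ * ·)).card := by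
  have hinv : (F.image (·⁻¹)).image (· * h) = (F.image (h⁻¹ * ·)).image (·⁻¹) := by
    simp only [Finset.image_image]
    exact Finset.image_congr fun x _ => by simp [Function.comp, mul_inv_rev]
  rw [hinv, ← Finset.image_symmDiff _ _ inv_injective,
    Finset.card_image_of_injective _ inv_injective, symmDiff_comm]

lemma compEquiv_mulRight_finsetIndicator (h : G) (s : Finset G) :
    lp.compEquiv ℝ ℝ p (Equiv.mulRight h⁻¹) (lp.finsetIndicator p s)
      = lp.finsetIndicator p (s.image (· * h)) := by
  rw [lp.compEquiv_finsetIndicator, Finset.map_eq_image]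
  congr 1
  exact Finset.image_congr fun x _ => by simp

lemma IsFolner.exists_tendsto_compEquiv_mulRight_sub (hp : p ≠ ∞) {F : ℕ → Finset G}
    (hF : IsFolner F) : ∃ f : ℕ → lp (fun _ : G => ℝ) p, (∀ n, ‖f n‖ = 1) ∧
      ∀ h : G, Tendsto (fun n => lp.compEquiv ℝ ℝ p (Equiv.mulRight h⁻¹) (f n) - f n)
        atTop (𝓝 0) := by
  have hp' : 0 < p.toReal := ENNReal.toReal_pos (zero_lt_one.trans_le Fact.out).ne' hp
  -- inversion turns the left invariance of `F n` into right invariance of `A n`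
  set A : ℕ → Finset G := fun n => (F n).image (·⁻¹)
  set χ : ℕ → lp (fun _ : G => ℝ) p := fun n => lp.finsetIndicator p (A n)
  have hχ : ∀ n, ‖χ n‖ ^ p.toReal = (F n).card := fun n => by
    simp only [χ, A, lp.norm_rpow_finsetIndicator hp',
      Finset.card_image_of_injective _ inv_injective]
  have hχ0 : ∀ n, ‖χ n‖ ≠ 0 := fun n hn => by
    have := hχ n
    rw [hn, Real.zero_rpow hp'.ne'] at this
    exact (Nat.cast_ne_zero.2 (hF.1 n).card_ne_zero) this.symm
  refine ⟨fun n => ‖χ n‖⁻¹ • χ n, fun n => ?_, fun h => ?_⟩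
  · rw [norm_smul, norm_inv, norm_norm, inv_mul_cancel₀ (hχ0 n)]
  have hdiff : ∀ n, ‖lp.compEquiv ℝ ℝ p (Equiv.mulRight h⁻¹) (‖χ n‖⁻¹ • χ n) - ‖χ n‖⁻¹ • χ n‖
      = ‖χ n‖⁻¹ * ‖lp.finsetIndicator p ((A n).image (· * h) ∆ A n)‖ := fun n => by
    rw [map_smul, ← smul_sub, norm_smul, norm_inv, norm_norm, compEquiv_mulRight_finsetIndicator,
      lp.norm_finsetIndicator_sub (zero_lt_one.trans_le Fact.out).ne']
  rw [tendsto_zero_iff_norm_tendsto_zero]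
  refine tendsto_zero_of_tendsto_rpow_zero (fun n => norm_nonneg _) hp' ?_
  refine (hF.2 h⁻¹).congr fun n => ?_
  rw [hdiff, Real.mul_rpow (inv_nonneg.2 (norm_nonneg _)) (norm_nonneg _),
    Real.inv_rpow (norm_nonneg _), hχ, lp.norm_rpow_finsetIndicator hp',
    card_image_inv_mul_right_symmDiff, div_eq_inv_mul]

end Folner

theorem stmt5_general {G : Type*} [Group G] [DecidableEq G]
    (μ : G → ℝ) (hμ0 : ∀ g, 0 ≤ μ g) (hμ1 : ∑' g : G, μ g = 1)
    (T : lp (fun _ : G => ℝ) 2 →L[ℝ] lp (fun _ : G => ℝ) 2)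
    (hT : ∀ (f : lp (fun _ : G => ℝ) 2) (g : G),
      (T f).1 g = ∑' h : G, μ h * f.1 (g * h⁻¹))
    (hG : ∃ F : ℕ → Finset G, IsFolner F) :
    ‖T‖ = 1 := by
  have hμ : HasSum μ 1 := by
    have hsum : Summable μ := by
      by_contra h
      simp [tsum_eq_zero_of_not_summable h] at hμ1
    exact hμ1 ▸ hsum.hasSum
  obtain ⟨F, hF⟩ := hG
  obtain ⟨f, hf1, hf⟩ := hF.exists_tendsto_compEquiv_mulRight_sub (p := 2) ENNReal.ofNat_ne_top
  refine opNorm_eq_one_of_tendsto_sub (fun h => lp.compEquiv ℝ ℝ 2 (Equiv.mulRight h⁻¹))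
    hμ0 hμ (fun x => ?_) hf1 hf
  exact lp.eq_tsum_smul_of_forall_apply_eq hμ0 hμ.summable
    (fun h => ((lp.compEquiv ℝ ℝ 2 (Equiv.mulRight h⁻¹)).norm_map x).le) (hT x)

/-- Day's theorem (one direction): if `G` is a countable amenable group and `μ` a probability
measure on `G`, then the right convolution operator `(T f)(g) = Σ_h μ(h) f(g h⁻¹)` on `ℓ²(G)`
has operator norm `1`. -/
theorem stmt5 {G : Type*} [Group G] [Countable G] [DecidableEq G]
    (μ : G → ℝ) (hμ0 : ∀ g, 0 ≤ μ g) (hμ1 : ∑' g : G, μ g = 1)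
    (T : lp (fun _ : G => ℝ) 2 →L[ℝ] lp (fun _ : G => ℝ) 2)
    (hT : ∀ (f : lp (fun _ : G => ℝ) 2) (g : G),
      (T f).1 g = ∑' h : G, μ h * f.1 (g * h⁻¹))
    (hG : ∃ F : ℕ → Finset G, IsFolner F) :
    ‖T‖ = 1 :=
  stmt5_general μ hμ0 hμ1 T hT hG
end

section
/- Suppose there are α ≥ 1, a sequence (c_n) with c_n^{1/(2n)} → α, a sequence (N_n) with N_n/n → 0, constants C, D ≥ 1, l ∈ ℕ, and a sequence a_m ≥ 0 with limsup_m a_m^{1/m} = e^P for some P ∈ ℝ and a_m ≤ C' for all m. If x_n ≥ 0 satisfies x_n² ≤ c_n C² (2N_n+1) D²(l+1)² limsup_k (max_{−kN_n ≤ r ≤ k(N_n+2l)} a_{2nk+r})^{1/k} for all n large, then limsup_n x_n^{1/n} ≤ α e^P. -/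
open Filter

lemma aux_h2n : Tendsto (fun n : ℕ => (1:ℝ)/(2*n)) atTop (nhds 0) := by
  have h : Tendsto (fun n : ℕ => (2*(n:ℝ))) atTop atTop :=
    (tendsto_natCast_atTop_atTop (R := ℝ)).const_mul_atTop (by norm_num)
  have := tendsto_inv_atTop_zero.comp h
  apply this.congr
  intro n
  simp [one_div, Function.comp]

lemma aux_log : Tendsto (fun n : ℕ => Real.log (2*n+1) * ((1:ℝ)/(2*n))) atTop (nhds 0) := by
  have h1 : Tendsto (fun n : ℕ => (2*(n:ℝ)+1)) atTop atTop :=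
    tendsto_atTop_add_const_right _ 1 ((tendsto_natCast_atTop_atTop (R := ℝ)).const_mul_atTop (by norm_num))
  have h2 : Tendsto (fun n : ℕ => Real.log (2*n+1) / (2*(n:ℝ)+1)) atTop (nhds 0) :=
    (Real.isLittleO_log_id_atTop.tendsto_div_nhds_zero).comp h1
  have h3 : Tendsto (fun n : ℕ => (2*(n:ℝ)+1) * ((1:ℝ)/(2*n))) atTop (nhds 1) := by
    have ht : Tendsto (fun n : ℕ => 1 + (1:ℝ)/(2*n)) atTop (nhds 1) := by
      simpa using tendsto_const_nhds.add aux_h2n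
    apply ht.congr'
    filter_upwards [eventually_ge_atTop 1] with n hn
    have hne : (2*(n:ℝ)) ≠ 0 := by
      have : (1:ℝ) ≤ n := by exact_mod_cast hn
      positivity
    field_simp
  have := h2.mul h3
  rw [zero_mul] at this
  apply this.congr
  intro n
  have hne : (2*(n:ℝ)+1) ≠ 0 := by positivity
  field_simp
lemma auxA (a : ℕ → ℝ) (C' P ε : ℝ) (hε : 0 < ε)
    (ha0 : ∀ m, 0 ≤ a m) (hab : ∀ m, a m ≤ C')
    (haP : limsup (fun m : ℕ => a m ^ ((1:ℝ)/m)) atTop = Real.exp P) :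
    ∃ M : ℕ, 1 ≤ M ∧ ∀ m, M ≤ m → a m ≤ (Real.exp P + ε)^m := by
  set ρ := Real.exp P + ε with hρdef
  have hbdd : IsBoundedUnder (· ≤ ·) atTop (fun m : ℕ => a m ^ ((1:ℝ)/m)) := by
    apply isBoundedUnder_of
    refine ⟨max 1 C', fun m => ?_⟩
    rcases Nat.eq_zero_or_pos m with hm | hm
    · simp [hm]
    · calc a m ^ ((1:ℝ)/m) ≤ (max 1 C') ^ ((1:ℝ)/m) :=
            Real.rpow_le_rpow (ha0 m) ((hab m).trans (le_max_right _ _)) (by positivity)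
        _ ≤ (max 1 C') ^ (1:ℝ) := by
            apply Real.rpow_le_rpow_of_exponent_le (le_max_left _ _)
            rw [div_le_one (by exact_mod_cast hm)]
            exact_mod_cast hm
        _ = max 1 C' := Real.rpow_one _
  have hlt : ∀ᶠ m in atTop, a m ^ ((1:ℝ)/m) < ρ :=
    eventually_lt_of_limsup_lt (by rw [haP]; linarith) hbdd
  obtain ⟨M, hM⟩ := eventually_atTop.1 hlt
  refine ⟨max M 1, le_max_right _ _, fun m hm => ?_⟩
  have hm1 : 1 ≤ m := le_trans (le_max_right _ _) hm
  have hmne : (m:ℝ) ≠ 0 := by positivity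
  have h := hM m (le_trans (le_max_left _ _) hm)
  calc a m = (a m ^ ((1:ℝ)/m)) ^ m := by
        rw [← Real.rpow_natCast (a m ^ ((1:ℝ)/m)) m, ← Real.rpow_mul (ha0 m)]
        rw [one_div, inv_mul_cancel₀ hmne, Real.rpow_one]
    _ ≤ ρ ^ m := pow_le_pow_left₀ (Real.rpow_nonneg (ha0 m) _) h.le m

lemma auxB (a : ℕ → ℝ) (C' ρ : ℝ) (l n M Nn : ℕ)
    (hρ : 0 < ρ) (ha0 : ∀ m, 0 ≤ a m) (hab : ∀ m, a m ≤ C')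
    (hM1 : 1 ≤ M) (haρ : ∀ m, M ≤ m → a m ≤ ρ ^ m) (hNn : Nn < n) :
    limsup (fun k : ℕ =>
        (sSup {y : ℝ | ∃ r : ℤ, -((k * Nn : ℕ) : ℤ) ≤ r ∧
            r ≤ ((k * (Nn + 2 * l) : ℕ) : ℤ) ∧
            y = a (((2 * n * k : ℕ) : ℤ) + r).toNat}) ^ ((1 : ℝ) / k)) atTop
      ≤ max (ρ ^ (2*n - Nn)) (ρ ^ (2*n + Nn + 2*l)) := by
  set A := 2*n - Nn with hA
  set B := 2*n + Nn + 2*l with hB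
  set Mn := max (ρ ^ A) (ρ ^ B) with hMn
  have hMnpos : 0 < Mn := lt_max_of_lt_left (by positivity)
  set s : ℕ → Set ℝ := fun k => {y : ℝ | ∃ r : ℤ, -((k * Nn : ℕ) : ℤ) ≤ r ∧
      r ≤ ((k * (Nn + 2 * l) : ℕ) : ℤ) ∧ y = a (((2 * n * k : ℕ) : ℤ) + r).toNat} with hs
  have hmem : ∀ k, a (2*n*k) ∈ s k := by
    intro k
    exact ⟨0, neg_nonpos.mpr (Int.natCast_nonneg _), Int.natCast_nonneg _, by rw [add_zero, Int.toNat_natCast]⟩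
  have hbddS : ∀ k, BddAbove (s k) := by
    intro k
    refine ⟨C', ?_⟩
    rintro y ⟨r, _, _, rfl⟩
    exact hab _
  have hS0 : ∀ k, 0 ≤ sSup (s k) := fun k => (ha0 _).trans (le_csSup (hbddS k) (hmem k))
  apply limsup_le_of_le (isCoboundedUnder_le_of_le atTop (x := 0)
    (fun k => Real.rpow_nonneg (hS0 k) _))
  filter_upwards [eventually_ge_atTop M] with k hk
  have hk1 : 1 ≤ k := le_trans hM1 hk
  have hSle : sSup (s k) ≤ Mn ^ k := by
    apply csSup_le ⟨_, hmem k⟩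
    rintro y ⟨r, hr1, hr2, rfl⟩
    set m := (((2 * n * k : ℕ) : ℤ) + r).toNat with hmdef
    have hNn2 : Nn ≤ 2*n := by omega
    have hkN : (k * Nn : ℕ) ≤ (2*n*k : ℕ) := by
      calc k * Nn ≤ k * (2*n) := Nat.mul_le_mul_left k hNn2
        _ = 2*n*k := by ring
    have hmnn : (0:ℤ) ≤ ((2 * n * k : ℕ) : ℤ) + r := by
      have h1 : -(((2*n*k : ℕ):ℤ)) ≤ -((k * Nn : ℕ) : ℤ) := by
        simp only [neg_le_neg_iff]
        exact_mod_cast hkN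
      linarith
    have hmz : (m:ℤ) = ((2 * n * k : ℕ) : ℤ) + r := Int.toNat_of_nonneg hmnn
    have hcastA : ((A:ℕ):ℤ) = 2*(n:ℤ) - (Nn:ℤ) := by
      rw [hA, Nat.cast_sub hNn2]; push_cast; ring
    have hAle : k * A ≤ m := by
      have : ((k*A : ℕ):ℤ) ≤ (m:ℤ) := by
        rw [hmz]; push_cast [Nat.cast_sub hNn2]
        have hr1' : -((k:ℤ) * Nn) ≤ r := by exact_mod_cast hr1
        nlinarith [hr1']
      exact_mod_cast this
    have hBle : m ≤ k * B := by
      have : (m:ℤ) ≤ ((k*B : ℕ):ℤ) := by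
        rw [hmz]; push_cast [hB]
        have hr2' : r ≤ (k:ℤ) * (Nn + 2*l) := by exact_mod_cast hr2
        nlinarith [hr2']
      exact_mod_cast this
    have hA1 : 1 ≤ A := by omega
    have hmM : M ≤ m := by
      calc M ≤ k := hk
        _ = k * 1 := (mul_one k).symm
        _ ≤ k * A := Nat.mul_le_mul_left k hA1
        _ ≤ m := hAle
    have ham := haρ m hmM
    have hpow : ρ ^ m ≤ Mn ^ k := by
      rcases le_total 1 ρ with h1 | h1
      · calc ρ^m ≤ ρ^(k*B) := pow_le_pow_right₀ h1 hBle
          _ = (ρ^B)^k := pow_mul' ρ k B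
          _ ≤ Mn^k := pow_le_pow_left₀ (by positivity) (le_max_right _ _) k
      · calc ρ^m ≤ ρ^(k*A) := pow_le_pow_of_le_one hρ.le h1 hAle
          _ = (ρ^A)^k := pow_mul' ρ k A
          _ ≤ Mn^k := pow_le_pow_left₀ (by positivity) (le_max_left _ _) k
    exact ham.trans hpow
  have hkne : (k:ℝ) ≠ 0 := by positivity
  calc sSup (s k) ^ ((1:ℝ)/k) ≤ (Mn^k) ^ ((1:ℝ)/k) :=
        Real.rpow_le_rpow (hS0 k) hSle (by positivity)
    _ = Mn := by
        rw [← Real.rpow_natCast Mn k, ← Real.rpow_mul hMnpos.le, mul_one_div,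
          div_self hkne, Real.rpow_one]
lemma auxD (α C D ρ : ℝ) (l : ℕ) (c : ℕ → ℝ) (N : ℕ → ℕ)
    (hα : 1 ≤ α) (hC : 1 ≤ C) (hD : 1 ≤ D) (hρ : 0 < ρ)
    (hcpos : ∀ n, 0 < c n)
    (hc : Tendsto (fun n : ℕ => c n ^ ((1:ℝ)/(2*n))) atTop (nhds α))
    (hN : Tendsto (fun n : ℕ => (N n:ℝ)/n) atTop (nhds 0)) :
    Tendsto (fun n : ℕ =>
      ((c n * C^2 * (2*(N n:ℝ)+1) * D^2 * ((l:ℝ)+1)^2) *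
        (max (ρ^(2*n - N n)) (ρ^(2*n + N n + 2*l)))) ^ ((1:ℝ)/(2*n)))
      atTop (nhds (α * ρ)) := by
  have hα0 : (0:ℝ) < α := lt_of_lt_of_le one_pos hα
  set Kf : ℕ → ℝ := fun n => c n * C^2 * (2*(N n:ℝ)+1) * D^2 * ((l:ℝ)+1)^2 with hKf
  set Mf : ℕ → ℝ := fun n => max (ρ^(2*n - N n)) (ρ^(2*n + N n + 2*l)) with hMf
  have hKpos : ∀ n, 0 < Kf n := by
    intro n; have := hcpos n; positivity
  have hMpos : ∀ n, 0 < Mf n := fun n => lt_max_of_lt_left (by positivity)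
  -- eventual facts
  have hNlt : ∀ᶠ n in atTop, N n ≤ n := by
    filter_upwards [hN.eventually_lt_const one_pos, eventually_ge_atTop 1] with n h1 h2
    have hn0 : (0:ℝ) < n := by exact_mod_cast h2
    have : (N n : ℝ) < n := by
      rw [div_lt_one hn0] at h1; exact h1
    exact_mod_cast this.le
  -- limit of each log piece
  have t1 : Tendsto (fun n : ℕ => Real.log (c n) * ((1:ℝ)/(2*n))) atTop (nhds (Real.log α)) := by
    have := hc.log (ne_of_gt hα0)
    apply this.congr
    intro n
    rw [Real.log_rpow (hcpos n), mul_comm]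
  have t2 : Tendsto (fun n : ℕ => Real.log (C^2 * D^2 * ((l:ℝ)+1)^2) * ((1:ℝ)/(2*n)))
      atTop (nhds 0) := by
    simpa using (aux_h2n.const_mul (Real.log (C^2 * D^2 * ((l:ℝ)+1)^2)))
  have t3 : Tendsto (fun n : ℕ => Real.log (2*(N n:ℝ)+1) * ((1:ℝ)/(2*n))) atTop (nhds 0) := by
    apply tendsto_of_tendsto_of_tendsto_of_le_of_le' tendsto_const_nhds aux_log
    · filter_upwards with n
      have h0 : (0:ℝ) ≤ (N n : ℝ) := Nat.cast_nonneg _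
      have h1 : (1:ℝ) ≤ 2*(N n:ℝ)+1 := by linarith
      exact mul_nonneg (Real.log_nonneg h1) (by positivity)
    · filter_upwards [hNlt] with n hn
      apply mul_le_mul_of_nonneg_right _ (by positivity)
      apply Real.log_le_log (by positivity)
      have : (N n : ℝ) ≤ n := by exact_mod_cast hn
      linarith
  have hA : Tendsto (fun n : ℕ => ((2*n - N n : ℕ):ℝ) * ((1:ℝ)/(2*n))) atTop (nhds 1) := by
    have ht : Tendsto (fun n : ℕ => 1 - ((N n:ℝ)/n) * (1/2)) atTop (nhds 1) := by
      simpa using tendsto_const_nhds.sub (hN.mul_const (1/2:ℝ))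
    apply ht.congr'
    filter_upwards [hNlt, eventually_ge_atTop 1] with n h1 h2
    have hn0 : (0:ℝ) < n := by exact_mod_cast h2
    have hle : N n ≤ 2*n := by omega
    rw [Nat.cast_sub hle]
    push_cast
    field_simp
  have hB : Tendsto (fun n : ℕ => ((2*n + N n + 2*l : ℕ):ℝ) * ((1:ℝ)/(2*n))) atTop (nhds 1) := by
    have ht : Tendsto (fun n : ℕ => 1 + ((N n:ℝ)/n) * (1/2) + (l:ℝ) * (1/n)) atTop (nhds 1) := by
      have h1 : Tendsto (fun n : ℕ => (1:ℝ) + ((N n:ℝ)/n) * (1/2)) atTop (nhds (1 + 0*(1/2))) :=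
        tendsto_const_nhds.add (hN.mul_const _)
      have h2 : Tendsto (fun n : ℕ => (l:ℝ) * ((1:ℝ)/n)) atTop (nhds ((l:ℝ)*0)) :=
        tendsto_one_div_atTop_nhds_zero_nat.const_mul _
      simpa using h1.add h2
    apply ht.congr'
    filter_upwards [eventually_ge_atTop 1] with n h2
    have hn0 : (0:ℝ) < n := by exact_mod_cast h2
    push_cast
    field_simp
  have t6 : Tendsto (fun n : ℕ => Real.log (Mf n) * ((1:ℝ)/(2*n))) atTop (nhds (Real.log ρ)) := by
    have hmax : Tendsto (fun n : ℕ =>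
        max (Real.log (ρ^(2*n - N n)) * ((1:ℝ)/(2*n))) (Real.log (ρ^(2*n + N n + 2*l)) * ((1:ℝ)/(2*n))))
        atTop (nhds (Real.log ρ)) := by
      have h1 : Tendsto (fun n : ℕ => Real.log (ρ^(2*n - N n)) * ((1:ℝ)/(2*n))) atTop (nhds (Real.log ρ)) := by
        have := hA.mul_const (Real.log ρ)
        rw [one_mul] at this
        apply this.congr
        intro n
        rw [Real.log_pow]
        ring
      have h2 : Tendsto (fun n : ℕ => Real.log (ρ^(2*n + N n + 2*l)) * ((1:ℝ)/(2*n))) atTop (nhds (Real.log ρ)) := by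
        have := hB.mul_const (Real.log ρ)
        rw [one_mul] at this
        apply this.congr
        intro n
        rw [Real.log_pow]
        ring
      simpa using h1.max h2
    apply hmax.congr
    intro n
    rw [← max_mul_of_nonneg _ _ (by positivity : (0:ℝ) ≤ (1:ℝ)/(2*n))]
    congr 1
    have hx : (0:ℝ) < ρ^(2*n - N n) := by positivity
    have hy : (0:ℝ) < ρ^(2*n + N n + 2*l) := by positivity
    rcases le_total (ρ^(2*n - N n)) (ρ^(2*n + N n + 2*l)) with h | h
    · rw [show Mf n = max (ρ^(2*n - N n)) (ρ^(2*n + N n + 2*l)) from rfl,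
        max_eq_right h, max_eq_right ((Real.log_le_log_iff hx hy).mpr h)]
    · rw [show Mf n = max (ρ^(2*n - N n)) (ρ^(2*n + N n + 2*l)) from rfl,
        max_eq_left h, max_eq_left ((Real.log_le_log_iff hy hx).mpr h)]
  -- assemble
  have hL : Tendsto (fun n : ℕ => Real.log (Kf n * Mf n) * ((1:ℝ)/(2*n))) atTop
      (nhds (Real.log α + Real.log ρ)) := by
    have hsum := ((((t1.add t2).add t3).add t6))
    have : (Real.log α + 0 + 0 + Real.log ρ) = Real.log α + Real.log ρ := by ring
    rw [this] at hsum
    apply hsum.congr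
    intro n
    have h1 : Real.log (Kf n * Mf n) =
        Real.log (c n) + Real.log (C^2 * D^2 * ((l:ℝ)+1)^2) + Real.log (2*(N n:ℝ)+1)
          + Real.log (Mf n) := by
      have hc0 : c n ≠ 0 := ne_of_gt (hcpos n)
      have hCn : (C^2 * D^2 * ((l:ℝ)+1)^2) ≠ 0 := by positivity
      have hNn : (2*(N n:ℝ)+1) ≠ 0 := by positivity
      have hMn : Mf n ≠ 0 := ne_of_gt (hMpos n)
      have hK : Kf n = c n * (C^2 * D^2 * ((l:ℝ)+1)^2) * (2*(N n:ℝ)+1) := by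
        rw [hKf]; ring
      rw [hK, Real.log_mul (by positivity) hMn, Real.log_mul (by positivity) hNn,
        Real.log_mul hc0 hCn]
    rw [h1]
    ring
  -- conclude via exp
  have hfin := (Real.continuous_exp.tendsto _).comp hL
  have : Real.exp (Real.log α + Real.log ρ) = α * ρ := by
    rw [Real.exp_add, Real.exp_log hα0, Real.exp_log hρ]
  rw [this] at hfin
  apply hfin.congr
  intro n
  simp only [Function.comp]
  rw [Real.rpow_def_of_pos (mul_pos (hKpos n) (hMpos n))]

/-- The abstract limiting estimate concluding the proof of Proposition 1.4: if `x_n ≥ 0`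
satisfies, for all large `n`,
`x_n² ≤ c_n C² (2N_n+1) D² (l+1)² · limsup_k (max_{−kN_n ≤ r ≤ k(N_n+2l)} a_{2nk+r})^{1/k}`,
where `c_n^{1/(2n)} → α`, `N_n/n → 0`, `a` is nonnegative and uniformly bounded with
`limsup_m a_m^{1/m} = e^P`, then `limsup_n x_n^{1/n} ≤ α e^P`. -/
theorem stmt18 (α C D C' P : ℝ) (l : ℕ) (hα : 1 ≤ α) (hC : 1 ≤ C) (hD : 1 ≤ D)
    (hC' : 0 ≤ C') (c : ℕ → ℝ) (N : ℕ → ℕ) (x a : ℕ → ℝ)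
    (hcpos : ∀ n, 0 < c n)
    (hc : Tendsto (fun n : ℕ => c n ^ ((1 : ℝ) / (2 * n))) atTop (nhds α))
    (hN : Tendsto (fun n : ℕ => (N n : ℝ) / n) atTop (nhds 0))
    (hx0 : ∀ n, 0 ≤ x n) (ha0 : ∀ m, 0 ≤ a m) (hab : ∀ m, a m ≤ C')
    (haP : Filter.limsup (fun m : ℕ => a m ^ ((1 : ℝ) / m)) Filter.atTop = Real.exp P)
    (hrec : ∃ n₀ : ℕ, ∀ n ≥ n₀,
      x n ^ 2 ≤ c n * C ^ 2 * (2 * (N n : ℝ) + 1) * D ^ 2 * ((l : ℝ) + 1) ^ 2 *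
        Filter.limsup (fun k : ℕ =>
          (sSup {y : ℝ | ∃ r : ℤ, -((k * N n : ℕ) : ℤ) ≤ r ∧
              r ≤ ((k * (N n + 2 * l) : ℕ) : ℤ) ∧
              y = a (((2 * n * k : ℕ) : ℤ) + r).toNat}) ^ ((1 : ℝ) / k))
          Filter.atTop) :
    Filter.limsup (fun n : ℕ => x n ^ ((1 : ℝ) / n)) Filter.atTop ≤ α * Real.exp P := by
  obtain ⟨n₀, hrec⟩ := hrec
  have hα0 : (0:ℝ) < α := lt_of_lt_of_le one_pos hα
  have main : ∀ ε : ℝ, 0 < ε →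
      limsup (fun n : ℕ => x n ^ ((1:ℝ)/n)) atTop ≤ α * (Real.exp P + ε) := by
    intro ε hε
    have hρ : 0 < Real.exp P + ε := by
      have := Real.exp_pos P; linarith
    obtain ⟨M, hM1, haρ⟩ := auxA a C' P ε hε ha0 hab haP
    have hg := auxD α C D (Real.exp P + ε) l c N hα hC hD hρ hcpos hc hN
    have hNlt : ∀ᶠ n in atTop, N n < n := by
      filter_upwards [hN.eventually_lt_const one_pos, eventually_ge_atTop 1] with n h1 h2
      have hn0 : (0:ℝ) < n := by exact_mod_cast h2
      have : (N n : ℝ) < n := by rw [div_lt_one hn0] at h1; exact h1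
      exact_mod_cast this
    have hxg : ∀ᶠ n in atTop, x n ^ ((1:ℝ)/n) ≤
        ((c n * C^2 * (2*(N n:ℝ)+1) * D^2 * ((l:ℝ)+1)^2) *
          (max ((Real.exp P + ε)^(2*n - N n)) ((Real.exp P + ε)^(2*n + N n + 2*l)))) ^ ((1:ℝ)/(2*n)) := by
      filter_upwards [hNlt, eventually_ge_atTop (max n₀ 1)] with n hn1 hn2
      have hn0 : n₀ ≤ n := le_trans (le_max_left _ _) hn2
      have hn1' : 1 ≤ n := le_trans (le_max_right _ _) hn2
      have hKpos : (0:ℝ) < c n * C^2 * (2*(N n:ℝ)+1) * D^2 * ((l:ℝ)+1)^2 := by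
        have := hcpos n; positivity
      have hMpos : (0:ℝ) < max ((Real.exp P + ε)^(2*n - N n)) ((Real.exp P + ε)^(2*n + N n + 2*l)) :=
        lt_max_of_lt_left (by positivity)
      have hlim := auxB a C' (Real.exp P + ε) l n M (N n) hρ ha0 hab hM1 haρ hn1
      have h2 : x n ^ 2 ≤ (c n * C^2 * (2*(N n:ℝ)+1) * D^2 * ((l:ℝ)+1)^2) *
          (max ((Real.exp P + ε)^(2*n - N n)) ((Real.exp P + ε)^(2*n + N n + 2*l))) :=
        (hrec n hn0).trans (mul_le_mul_of_nonneg_left hlim hKpos.le)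
      have h3 : x n ≤ Real.sqrt ((c n * C^2 * (2*(N n:ℝ)+1) * D^2 * ((l:ℝ)+1)^2) *
          (max ((Real.exp P + ε)^(2*n - N n)) ((Real.exp P + ε)^(2*n + N n + 2*l)))) := by
        rw [show x n = Real.sqrt (x n ^ 2) from (Real.sqrt_sq (hx0 n)).symm]
        exact Real.sqrt_le_sqrt h2
      have hKM : (0:ℝ) < (c n * C^2 * (2*(N n:ℝ)+1) * D^2 * ((l:ℝ)+1)^2) *
          (max ((Real.exp P + ε)^(2*n - N n)) ((Real.exp P + ε)^(2*n + N n + 2*l))) :=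
        mul_pos hKpos hMpos
      calc x n ^ ((1:ℝ)/n)
          ≤ (Real.sqrt ((c n * C^2 * (2*(N n:ℝ)+1) * D^2 * ((l:ℝ)+1)^2) *
            (max ((Real.exp P + ε)^(2*n - N n)) ((Real.exp P + ε)^(2*n + N n + 2*l))))) ^ ((1:ℝ)/n) :=
            Real.rpow_le_rpow (hx0 n) h3 (by positivity)
        _ = (((c n * C^2 * (2*(N n:ℝ)+1) * D^2 * ((l:ℝ)+1)^2) *
            (max ((Real.exp P + ε)^(2*n - N n)) ((Real.exp P + ε)^(2*n + N n + 2*l)))) ^ ((1:ℝ)/2)) ^ ((1:ℝ)/n) := by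
            rw [Real.sqrt_eq_rpow]
        _ = ((c n * C^2 * (2*(N n:ℝ)+1) * D^2 * ((l:ℝ)+1)^2) *
            (max ((Real.exp P + ε)^(2*n - N n)) ((Real.exp P + ε)^(2*n + N n + 2*l)))) ^ ((1:ℝ)/(2*n)) := by
            rw [← Real.rpow_mul hKM.le]
            congr 1
            rw [div_mul_div_comm, one_mul]
    have hco : IsCoboundedUnder (· ≤ ·) atTop (fun n : ℕ => x n ^ ((1:ℝ)/n)) :=
      isCoboundedUnder_le_of_le atTop (x := 0) fun n => Real.rpow_nonneg (hx0 n) _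
    calc limsup (fun n : ℕ => x n ^ ((1:ℝ)/n)) atTop
        ≤ limsup (fun n : ℕ =>
          ((c n * C^2 * (2*(N n:ℝ)+1) * D^2 * ((l:ℝ)+1)^2) *
            (max ((Real.exp P + ε)^(2*n - N n)) ((Real.exp P + ε)^(2*n + N n + 2*l)))) ^ ((1:ℝ)/(2*n))) atTop :=
          limsup_le_limsup hxg hco hg.isBoundedUnder_le
      _ = α * (Real.exp P + ε) := hg.limsup_eq
  apply le_of_forall_pos_le_add
  intro δ hδ
  have h := main (δ/α) (by positivity)
  calc limsup (fun n : ℕ => x n ^ ((1:ℝ)/n)) atTop ≤ α * (Real.exp P + δ/α) := h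
    _ = α * Real.exp P + δ := by rw [mul_add, mul_div_cancel₀ _ (ne_of_gt hα0)]
end
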